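/- arXiv:1407.8107 — 3 statements merged into one kernel-verified Lean document; each statement's English description precedes it below -/
import Mathlib

section
/- Let Φ be a reversible bijection of phase space, ρ a nonnegative F-invariant function, and for k ≥ 1 define Σ^{(k)}(z) = min(1, max_{1 ≤ j ≤ k} ρ(Φ^j(z))/ρ(z)) (assuming ρ(z) > 0 everywhere), p^{(k)}(z) = Σ^{(k)}(z) − Σ^{(k−1)}(z) with Σ^{(0)} = 0. Then for every z and every k with 1 ≤ k ≤ K+1, ρ(z)·p^{(k)}(z) = ρ(F(Φ^k(z)))·p^{(k)}(F(Φ^k(z))). -/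
/-!
Multiplying by `ρ z > 0` turns `ρ z * Σ⁽ᵏ⁾ z` into `min (ρ z) (max_{1 ≤ j ≤ k} ρ (Φ^j z))`.
By reversibility the orbit of `z' = F (Φ^k z)` retraces that of `z` backwards:
`ρ (Φ^j z') = ρ (Φ^(k-j) z)` for `j ≤ k`. Writing `a = ρ z`, `c = ρ (Φ^k z)` and `b` for the
maximum of `ρ ∘ Φ^j` over the interior indices `1 ≤ j < k`, the two sides become
`min a (max c b) - min a b` and `min c (max a b) - min c b`, which agree (for `k = 1` both
are `min a c`).
-/

open Finset Function

theorem min_max_sub_min_comm {α : Type*} [AddCommGroup α] [LinearOrder α] [IsOrderedAddMonoid α]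
    (a b c : α) : min a (max c b) - min a b = min c (max a b) - min c b := by
  wlog hac : a ≤ c generalizing a c
  · exact (this c a (le_of_not_ge hac)).symm
  rcases le_total b a with hba | hab
  · simp [hba, hac, hba.trans hac]
  rcases le_total b c with hbc | hcb
  · simp [hab, hbc, hac]
  · simp [hcb, hac.trans hcb]

theorem mul_min_one_sup'_div {ι 𝕜 : Type*} [Field 𝕜] [LinearOrder 𝕜] [IsStrictOrderedRing 𝕜]
    (s : Finset ι) (H : s.Nonempty) (f : ι → 𝕜) {a : 𝕜} (ha : 0 < a) :
    a * min 1 (s.sup' H fun i => f i / a) = min a (s.sup' H f) := by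
  rw [mul_min_of_nonneg _ _ ha.le, mul_one,
    apply_sup'_eq_sup'_comp H _ fun x y => mul_max_of_nonneg x y ha.le]
  congr 1
  exact sup'_congr H rfl fun i _ => mul_div_cancel₀ _ ha.ne'

theorem sup'_Icc_one_add_one {β : Type*} [SemilatticeSup β] (g : ℕ → β) {m : ℕ}
    (H₁ : (Icc 1 (m + 1)).Nonempty) (H₂ : (Icc 1 m).Nonempty) :
    (Icc 1 (m + 1)).sup' H₁ g = g (m + 1) ⊔ (Icc 1 m).sup' H₂ g := by
  have hinsert := insert_Icc_right_eq_Icc_add_one (Nat.le_succ_of_le (nonempty_Icc.mp H₂))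
  rw [sup'_congr H₁ hinsert.symm fun _ _ => rfl, sup'_insert]

theorem sup'_Icc_one_reflect {β : Type*} [SemilatticeSup β] {g h : ℕ → β} {m : ℕ}
    (H : (Icc 1 m).Nonempty) (hgh : ∀ j ∈ Icc 1 m, h j = g (m + 1 - j)) :
    (Icc 1 m).sup' H h = (Icc 1 m).sup' H g := by
  have himage : (Icc 1 m).image (fun j => m + 1 - j) = Icc 1 m := by
    ext i
    simp only [mem_image, mem_Icc]
    exact ⟨by omega, fun hi => ⟨m + 1 - i, by omega, by omega⟩⟩
  rw [sup'_congr H rfl hgh, ← comp_def g, sup'_comp_eq_image]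
  exact sup'_congr _ himage fun _ _ => rfl

theorem iterate_flip_iterate {α : Type*} {Φ : α ≃ α} {F : α → α} (hF : Involutive F)
    (hrev : ∀ z, Φ.symm z = F (Φ (F z))) {j k : ℕ} (hjk : j ≤ k) (z : α) :
    Φ^[j] (F (Φ^[k] z)) = F (Φ^[k - j] z) := by
  have hsemiconj : Semiconj F Φ.symm Φ := fun w => by rw [hrev, hF]
  rw [← (hsemiconj.iterate_right j).eq]
  conv_lhs => rw [← Nat.add_sub_cancel' hjk, iterate_add_apply, Φ.leftInverse_symm.iterate j]

theorem key_identity_modified_detailed_balance_general (d K : ℕ)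
    (Φ : ((Fin d → ℝ) × (Fin d → ℝ)) ≃ ((Fin d → ℝ) × (Fin d → ℝ)))
    (F : (Fin d → ℝ) × (Fin d → ℝ) → (Fin d → ℝ) × (Fin d → ℝ))
    (hF : ∀ z, F z = (z.1, -z.2))
    (hrev : ∀ z, Φ.symm z = F (Φ (F z)))
    (ρ : (Fin d → ℝ) × (Fin d → ℝ) → ℝ)
    (hρpos : ∀ z, 0 < ρ z)
    (hρF : ∀ z, ρ (F z) = ρ z)
    (S : ℕ → ((Fin d → ℝ) × (Fin d → ℝ)) → ℝ)
    (hS0 : ∀ z, S 0 z = 0)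
    (hS : ∀ k (hk : 1 ≤ k) z,
      S k z = min 1 ((Finset.Icc 1 k).sup' (Finset.nonempty_Icc.mpr hk)
        fun j => ρ ((⇑Φ)^[j] z) / ρ z)) :
    ∀ z, ∀ k, 1 ≤ k → k ≤ K + 1 →
      ρ z * (S k z - S (k - 1) z) =
        ρ (F ((⇑Φ)^[k] z)) *
          (S k (F ((⇑Φ)^[k] z)) - S (k - 1) (F ((⇑Φ)^[k] z))) := by
  have hFF : Involutive F := fun z => by simp [hF]
  have hρS : ∀ n (hn : 1 ≤ n) w, ρ w * S n w =
      min (ρ w) ((Icc 1 n).sup' (nonempty_Icc.mpr hn) fun j => ρ (Φ^[j] w)) :=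
    fun n hn w => by rw [hS n hn, mul_min_one_sup'_div _ _ _ (hρpos w)]
  intro z k hk _
  obtain ⟨m, rfl⟩ := Nat.exists_eq_add_of_le' hk
  set z' := F (Φ^[m + 1] z)
  have horbit : ∀ j ≤ m + 1, ρ (Φ^[j] z') = ρ (Φ^[m + 1 - j] z) :=
    fun j hj => by rw [iterate_flip_iterate hFF hrev hj, hρF]
  have hstart : ρ z' = ρ (Φ^[m + 1] z) := horbit 0 (Nat.zero_le _)
  have hend : ρ (Φ^[m + 1] z') = ρ z := by simpa using horbit (m + 1) le_rfl
  rw [Nat.add_sub_cancel, mul_sub, mul_sub, hρS _ hk, hρS _ hk]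
  rcases Nat.eq_zero_or_pos m with rfl | hm
  · simp only [hS0, mul_zero, sub_zero, Icc_self, sup'_singleton, hstart, hend]
    exact min_comm _ _
  rw [hρS _ hm, hρS _ hm, hstart, sup'_Icc_one_add_one _ _ (nonempty_Icc.mpr hm),
    sup'_Icc_one_add_one _ _ (nonempty_Icc.mpr hm), hend,
    sup'_Icc_one_reflect (g := fun j => ρ (Φ^[j] z)) _
      fun j hj => horbit j ((mem_Icc.mp hj).2.trans m.le_succ)]
  exact min_max_sub_min_comm _ _ _

theorem key_identity_modified_detailed_balance (d K : ℕ) (hd : 1 ≤ d)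
    (Φ : ((Fin d → ℝ) × (Fin d → ℝ)) ≃ ((Fin d → ℝ) × (Fin d → ℝ)))
    (F : (Fin d → ℝ) × (Fin d → ℝ) → (Fin d → ℝ) × (Fin d → ℝ))
    (hF : ∀ z, F z = (z.1, -z.2))
    (hrev : ∀ z, Φ.symm z = F (Φ (F z)))
    (ρ : (Fin d → ℝ) × (Fin d → ℝ) → ℝ)
    (hρpos : ∀ z, 0 < ρ z)
    (hρF : ∀ z, ρ (F z) = ρ z)
    (S : ℕ → ((Fin d → ℝ) × (Fin d → ℝ)) → ℝ)
    (hS0 : ∀ z, S 0 z = 0)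
    (hS : ∀ k (hk : 1 ≤ k) z,
      S k z = min 1 ((Finset.Icc 1 k).sup' (Finset.nonempty_Icc.mpr hk)
        fun j => ρ ((⇑Φ)^[j] z) / ρ z)) :
    ∀ z, ∀ k, 1 ≤ k → k ≤ K + 1 →
      ρ z * (S k z - S (k - 1) z) =
        ρ (F ((⇑Φ)^[k] z)) *
          (S k (F ((⇑Φ)^[k] z)) - S (k - 1) (F ((⇑Φ)^[k] z))) :=
  key_identity_modified_detailed_balance_general d K Φ F hF hrev ρ hρpos hρF S hS0 hS
end

section
/- Let Φ be a reversible bijection of phase space and ρ a strictly positive F-invariant function. With M^{(k)}(z) = max_{1 ≤ j ≤ k} ρ(Φ^j(z))/ρ(z), one has ρ(z)·M^{(k−1)}(z) = ρ(F(Φ^k(z)))·M^{(k−1)}(F(Φ^k(z))) for all z and all k ≥ 2. -/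
lemma mul_sup'_aux (c : ℝ) (hc : 0 < c) (s : Finset ℕ) (hs : s.Nonempty) (f : ℕ → ℝ) :
    c * s.sup' hs f = s.sup' hs (fun j => c * f j) := by
  apply le_antisymm
  · obtain ⟨j, hj, hje⟩ := Finset.exists_mem_eq_sup' hs f
    rw [hje]
    exact Finset.le_sup' (fun j => c * f j) hj
  · apply Finset.sup'_le
    intro j hj
    exact mul_le_mul_of_nonneg_left (Finset.le_sup' f hj) hc.le

theorem max_ratio_symmetry (d : ℕ) (hd : 1 ≤ d)
    (Φ : ((Fin d → ℝ) × (Fin d → ℝ)) ≃ ((Fin d → ℝ) × (Fin d → ℝ)))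
    (F : (Fin d → ℝ) × (Fin d → ℝ) → (Fin d → ℝ) × (Fin d → ℝ))
    (hF : ∀ z, F z = (z.1, -z.2))
    (hrev : ∀ z, Φ.symm z = F (Φ (F z)))
    (ρ : (Fin d → ℝ) × (Fin d → ℝ) → ℝ)
    (hρpos : ∀ z, 0 < ρ z)
    (hρF : ∀ z, ρ (F z) = ρ z)
    (M : ℕ → ((Fin d → ℝ) × (Fin d → ℝ)) → ℝ)
    (hM : ∀ k (hk : 1 ≤ k) z,
      M k z = (Finset.Icc 1 k).sup' (Finset.nonempty_Icc.mpr hk)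
        fun j => ρ ((⇑Φ)^[j] z) / ρ z) :
    ∀ z, ∀ k, 2 ≤ k →
      ρ z * M (k - 1) z =
        ρ (F ((⇑Φ)^[k] z)) * M (k - 1) (F ((⇑Φ)^[k] z)) := by
  have hFF : ∀ z, F (F z) = z := by
    intro z; rw [hF, hF]; simp
  have hB : ∀ w, Φ (F w) = F (Φ.symm w) := by
    intro w
    rw [hrev w, hFF]
  have hC : ∀ j w, (⇑Φ)^[j] (F w) = F ((⇑Φ.symm)^[j] w) := by
    intro j
    induction j with
    | zero => simp
    | succ n ih =>
      intro w
      rw [Function.iterate_succ_apply', ih, hB, Function.iterate_succ_apply']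
  have hD : ∀ j k (z : _), j ≤ k → (⇑Φ.symm)^[j] ((⇑Φ)^[k] z) = (⇑Φ)^[k - j] z := by
    intro j k z hjk
    have : (⇑Φ)^[k] z = (⇑Φ)^[j] ((⇑Φ)^[k - j] z) := by
      rw [← Function.iterate_add_apply]
      congr 1
      omega
    rw [this, (Function.LeftInverse.iterate Φ.symm_apply_apply j) _]
  intro z k hk
  have hk1 : 1 ≤ k - 1 := by omega
  set w := F ((⇑Φ)^[k] z) with hw
  have hρw : ρ w = ρ ((⇑Φ)^[k] z) := hρF _
  have hiter : ∀ j, j ≤ k → ρ ((⇑Φ)^[j] w) = ρ ((⇑Φ)^[k - j] z) := by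
    intro j hj
    rw [hw, hC, hD j k z hj, hρF]
  rw [hM (k-1) hk1 z, hM (k-1) hk1 w]
  rw [mul_sup'_aux _ (hρpos z), mul_sup'_aux _ (hρpos w)]
  have e1 : ∀ j ∈ Finset.Icc 1 (k-1),
      ρ z * (ρ ((⇑Φ)^[j] z) / ρ z) = ρ ((⇑Φ)^[j] z) := by
    intro j _; rw [mul_comm, div_mul_cancel₀ _ (hρpos z).ne']
  have e2 : ∀ j ∈ Finset.Icc 1 (k-1),
      ρ w * (ρ ((⇑Φ)^[j] w) / ρ w) = ρ ((⇑Φ)^[k - j] z) := by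
    intro j hj
    simp only [Finset.mem_Icc] at hj
    rw [hiter j (by omega), mul_comm, div_mul_cancel₀ _ (hρpos w).ne']
  rw [Finset.sup'_congr _ rfl e1, Finset.sup'_congr _ rfl e2]
  apply le_antisymm
  · apply Finset.sup'_le
    intro j hj
    simp only [Finset.mem_Icc] at hj
    have hm : k - j ∈ Finset.Icc 1 (k-1) := by
      simp only [Finset.mem_Icc]; omega
    have : ρ ((⇑Φ)^[j] z) = ρ ((⇑Φ)^[k - (k - j)] z) := by
      have hjj : k - (k - j) = j := by omega
      rw [hjj]
    rw [this]
    exact Finset.le_sup' (fun x => ρ ((⇑Φ)^[k - x] z)) hm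
  · apply Finset.sup'_le
    intro j hj
    simp only [Finset.mem_Icc] at hj
    have hm : k - j ∈ Finset.Icc 1 (k-1) := by
      simp only [Finset.mem_Icc]; omega
    exact Finset.le_sup' (fun j => ρ ((⇑Φ)^[j] z)) hm
end

section
/- Let Φ be a reversible, Lebesgue-measure-preserving bijection of phase space Z = ℝ^d × ℝ^d, ρ a strictly positive F-invariant density, and let D be the Markov kernel that from state z moves to Φ^k(z) with probability p^{(k)}(z) = Σ^{(k)}(z) − Σ^{(k−1)}(z) for k = 1, ..., K+1 (where Σ^{(k)}(z) = min(1, max_{1 ≤ j ≤ k} ρ(Φ^j(z))/ρ(z)), Σ^{(0)} = 0) and to F(z) with probability 1 − Σ^{(K+1)}(z). Then D satisfies modified detailed balance with respect to ρ: for all bounded measurable f, ∫ ρ(z) E[f(z, D(z))] dz = ∫ ρ(F(z')) E[f(F(D(F(z'))), z')] dz', and consequently ρ is an invariant density of D. -/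
open MeasureTheory

/-- Phase space `ℝ^d × ℝ^d`. -/
abbrev PhaseSpace (d : ℕ) := ((Fin d → ℝ) × (Fin d → ℝ))

/-- The momentum flip `F(x,y) = (x,-y)`. -/
def flipMap (d : ℕ) : PhaseSpace d → PhaseSpace d := fun z => (z.1, -z.2)

/-- Accumulated acceptance probability
`Σ^{(k)}(z) = min(1, max_{1 ≤ j ≤ k} ρ(Φ^j z)/ρ(z))`, with `Σ^{(0)} = 0`. -/
noncomputable def Sig {d : ℕ} (Φ : PhaseSpace d → PhaseSpace d)
    (ρ : PhaseSpace d → ℝ) (k : ℕ) (z : PhaseSpace d) : ℝ :=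
  if h : 1 ≤ k then
    min 1 ((Finset.Icc 1 k).sup' (Finset.nonempty_Icc.mpr h)
      fun j => ρ (Φ^[j] z) / ρ z)
  else 0

/-- Acceptance probability of the `k`-th extra-chance proposal:
`p^{(k)}(z) = Σ^{(k)}(z) - Σ^{(k-1)}(z)`. -/
noncomputable def pAcc {d : ℕ} (Φ : PhaseSpace d → PhaseSpace d)
    (ρ : PhaseSpace d → ℝ) (k : ℕ) (z : PhaseSpace d) : ℝ :=
  Sig Φ ρ k z - Sig Φ ρ (k - 1) z

/-- The extra-chance accept/reject kernel `D`: from `z`, move to `Φ^k(z)` with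
probability `p^{(k)}(z)` for `k = 1, …, K+1`, and to `F(z)` with the remaining
probability `1 - Σ^{(K+1)}(z)`. -/
noncomputable def Dker {d : ℕ} (K : ℕ) (Φ : PhaseSpace d → PhaseSpace d)
    (ρ : PhaseSpace d → ℝ) (z : PhaseSpace d) : Measure (PhaseSpace d) :=
  (∑ k ∈ Finset.Icc 1 (K + 1),
      ENNReal.ofReal (pAcc Φ ρ k z) • Measure.dirac (Φ^[k] z)) +
    ENNReal.ofReal (1 - Sig Φ ρ (K + 1) z) • Measure.dirac (flipMap d z)

/-!
Write `g i = ρ(Φ^i z)`, so that `ρ(z) Σ^{(k)}(z) = min(g 0, max_{1 ≤ j ≤ k} g j)`.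
Reversibility means `Φ ∘ F ∘ Φ = F`, hence `Φ^i (F (Φ^k z)) = F (Φ^(k-i) z)` for `i ≤ k`:
from `F(Φ^k z)` the densities along the trajectory are met in reverse order, `i ↦ g (k - i)`.
The identity `min a (max b M) - min a M = min b (max a M) - min b M`, with
`M = max_{1 ≤ j < k} g j`, shows that `ρ p^{(k)}` is unchanged by this reversal, i.e.
`ρ(z) p^{(k)}(z) = ρ(F Φ^k z) p^{(k)}(F Φ^k z)`. Substituting `z ↦ F(Φ^k z)`, a
volume-preserving involution, gives modified detailed balance for each proposal `Φ^k`; the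
rejection move `F` is symmetric on its own. Invariance of `ρ` is the case `f(z, w) = 1_s(w)`,
as every `D(z)` is a probability measure.
-/

open Finset Function
open scoped ENNReal

lemma iterate_apply_apply_iterate_eq {α : Type*} {Φ F : α → α}
    (h : ∀ z, Φ (F (Φ z)) = F z) (n : ℕ) (z : α) : Φ^[n] (F (Φ^[n] z)) = F z := by
  induction n generalizing z with
  | zero => rfl
  | succ n ih => rw [iterate_succ_apply, iterate_succ_apply', h, ih]

lemma iterate_apply_apply_iterate_of_le {α : Type*} {Φ F : α → α}
    (h : ∀ z, Φ (F (Φ z)) = F z) {j k : ℕ} (hjk : j ≤ k) (z : α) :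
    Φ^[j] (F (Φ^[k] z)) = F (Φ^[k - j] z) := by
  rw [← Nat.add_sub_cancel' hjk, iterate_add_apply, Nat.add_sub_cancel_left,
    iterate_apply_apply_iterate_eq h]

section Reversible

variable {α : Type*} [MeasurableSpace α] {μ : Measure α}

theorem lintegral_mul_comp_eq_of_reversible {F T : α → α} (hF : Involutive F)
    (hFT : MeasurePreserving (F ∘ T) μ μ) (hFT_inv : Involutive (F ∘ T))
    {w : α → ℝ≥0∞} (hw : ∀ z, w (F (T z)) = w z) (f : α → α → ℝ≥0∞) :
    ∫⁻ z, w z * f (F (T z)) (F z) ∂μ = ∫⁻ z, w z * f z (T z) ∂μ := by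
  rw [← hFT.lintegral_comp_emb
    (MeasurableEquiv.ofInvolutive _ hFT_inv hFT.measurable).measurableEmbedding]
  refine lintegral_congr fun z => ?_
  simp only [comp_apply, hw, hF (T z)]
  rw [show F (T (F (T z))) = z from hFT_inv z]

theorem bind_withDensity_eq_of_modifiedDetailedBalance {F : α → α} {κ : α → Measure α}
    (hκ : Measurable κ) (hκ_prob : ∀ z, IsProbabilityMeasure (κ z)) {π : α → ℝ≥0∞}
    (hπ : Measurable π) (hπF : ∀ z, π (F z) = π z)
    (hbalance : ∀ f : α → α → ℝ≥0∞, Measurable (uncurry f) →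
      ∫⁻ z, π z * ∫⁻ w, f z w ∂κ z ∂μ =
        ∫⁻ z', π (F z') * ∫⁻ w, f (F w) z' ∂κ (F z') ∂μ) :
    (μ.withDensity π).bind κ = μ.withDensity π := by
  ext s hs
  have h := hbalance (fun _ w => s.indicator 1 w)
    ((measurable_one.indicator hs).comp measurable_snd)
  simp only [lintegral_indicator_one hs, lintegral_const, measure_univ, mul_one, hπF] at h
  have hκs : Measurable fun z => κ z s := (Measure.measurable_coe hs).comp hκ
  rw [Measure.bind_apply hs hκ.aemeasurable, lintegral_withDensity_eq_lintegral_mul _ hπ hκs,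
    withDensity_apply _ hs, ← lintegral_indicator hs]
  refine h.trans (lintegral_congr fun z => ?_)
  by_cases hz : z ∈ s <;> simp [hz]

end Reversible

noncomputable def cappedMax (g : ℕ → ℝ) (k : ℕ) : ℝ :=
  if h : 1 ≤ k then min (g 0) ((Icc 1 k).sup' (nonempty_Icc.mpr h) g) else 0

lemma cappedMax_congr {g g' : ℕ → ℝ} {k : ℕ} (h : ∀ i ≤ k, g i = g' i) :
    cappedMax g k = cappedMax g' k := by
  unfold cappedMax
  split_ifs with hk
  · rw [h 0 (Nat.zero_le k), sup'_congr _ rfl fun i hi => h i (mem_Icc.mp hi).2]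
  · rfl

lemma cappedMax_of_one_le (g : ℕ → ℝ) {k : ℕ} (hk : 1 ≤ k) :
    cappedMax g k = min (g 0) ((Icc 1 k).sup' (nonempty_Icc.mpr hk) g) :=
  dif_pos hk

lemma cappedMax_add_one (g : ℕ → ℝ) {n : ℕ} (hn : 1 ≤ n) :
    cappedMax g (n + 1) = min (g 0) (g (n + 1) ⊔ (Icc 1 n).sup' (nonempty_Icc.mpr hn) g) := by
  rw [cappedMax_of_one_le g (by omega),
    sup'_congr _ (insert_Icc_right_eq_Icc_add_one (by omega)).symm fun _ _ => rfl, sup'_insert]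

lemma sup'_Icc_one_reflect_s19 (g : ℕ → ℝ) {n : ℕ} (hn : 1 ≤ n) :
    (Icc 1 n).sup' (nonempty_Icc.mpr hn) (fun i => g (n + 1 - i)) =
      (Icc 1 n).sup' (nonempty_Icc.mpr hn) g := by
  refine le_antisymm (sup'_le _ _ fun i hi => ?_) (sup'_le _ _ fun i hi => ?_)
  · exact le_sup' g (by simp only [mem_Icc] at hi ⊢; omega)
  · rw [mem_Icc] at hi
    have := le_sup' (fun i => g (n + 1 - i)) (mem_Icc.mpr (by omega) : n + 1 - i ∈ Icc 1 n)
    rwa [show n + 1 - (n + 1 - i) = i by omega] at this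

lemma min_sup_sub_min_comm (a b M : ℝ) :
    min a (b ⊔ M) - min a M = min b (a ⊔ M) - min b M := by
  simp only [min_def, max_def]
  split_ifs <;> linarith

theorem cappedMax_sub_eq_reflect (g : ℕ → ℝ) {k : ℕ} (hk : 1 ≤ k) :
    cappedMax g k - cappedMax g (k - 1) =
      cappedMax (fun i => g (k - i)) k - cappedMax (fun i => g (k - i)) (k - 1) := by
  obtain ⟨n, rfl⟩ := Nat.exists_eq_add_of_le' hk
  rcases Nat.eq_zero_or_pos n with rfl | hn
  · simp [cappedMax, min_comm]
  · simp only [Nat.add_sub_cancel, cappedMax_add_one _ hn, cappedMax_of_one_le _ hn,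
      Nat.sub_zero, Nat.sub_self, sup'_Icc_one_reflect_s19 g hn]
    exact min_sup_sub_min_comm _ _ _

section Flip

variable {d : ℕ}

lemma flipMap_involutive : Involutive (flipMap d) := fun z => by
  simp [flipMap]

lemma measurable_flipMap : Measurable (flipMap d) :=
  measurable_fst.prodMk measurable_snd.neg

lemma measurePreserving_flipMap :
    MeasurePreserving (flipMap d) (volume : Measure (PhaseSpace d)) volume := by
  rw [Measure.volume_eq_prod]
  exact (MeasurePreserving.id _).prod (Measure.measurePreserving_neg _)

lemma lintegral_comp_flipMap (g : PhaseSpace d → ℝ≥0∞) :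
    ∫⁻ z, g (flipMap d z) = ∫⁻ z, g z :=
  measurePreserving_flipMap.lintegral_comp_emb
    (MeasurableEquiv.ofInvolutive _ flipMap_involutive measurable_flipMap).measurableEmbedding g

end Flip

section Acceptance

variable {d : ℕ} {Φ : PhaseSpace d → PhaseSpace d} {ρ : PhaseSpace d → ℝ}

lemma mul_sig_eq_cappedMax {z : PhaseSpace d} (hz : 0 < ρ z) (k : ℕ) :
    ρ z * Sig Φ ρ k z = cappedMax (fun i => ρ (Φ^[i] z)) k := by
  unfold Sig cappedMax
  split_ifs with hk
  · rw [mul_min_of_nonneg _ _ hz.le, mul_one,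
      apply_sup'_eq_sup'_comp _ _ fun x y => mul_max_of_nonneg x y hz.le]
    congr 1
    exact sup'_congr _ rfl fun j _ => mul_div_cancel₀ _ hz.ne'
  · exact mul_zero _

lemma mul_pAcc_eq_cappedMax_sub {z : PhaseSpace d} (hz : 0 < ρ z) (k : ℕ) :
    ρ z * pAcc Φ ρ k z =
      cappedMax (fun i => ρ (Φ^[i] z)) k - cappedMax (fun i => ρ (Φ^[i] z)) (k - 1) := by
  rw [pAcc, mul_sub, mul_sig_eq_cappedMax hz, mul_sig_eq_cappedMax hz]

theorem mul_pAcc_flipMap_iterate (hΦ : ∀ z, Φ (flipMap d (Φ z)) = flipMap d z)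
    (hρpos : ∀ z, 0 < ρ z) (hρF : ∀ z, ρ (flipMap d z) = ρ z) {k : ℕ} (hk : 1 ≤ k)
    (z : PhaseSpace d) :
    ρ (flipMap d (Φ^[k] z)) * pAcc Φ ρ k (flipMap d (Φ^[k] z)) = ρ z * pAcc Φ ρ k z := by
  have hreflect : ∀ i ≤ k, ρ (Φ^[i] (flipMap d (Φ^[k] z))) = ρ (Φ^[k - i] z) :=
    fun i hi => by rw [iterate_apply_apply_iterate_of_le hΦ hi, hρF]
  rw [mul_pAcc_eq_cappedMax_sub (hρpos _), mul_pAcc_eq_cappedMax_sub (hρpos _),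
    cappedMax_congr hreflect, cappedMax_congr fun i hi => hreflect i (by omega)]
  exact (cappedMax_sub_eq_reflect (fun i => ρ (Φ^[i] z)) hk).symm

lemma sig_nonneg (hρpos : ∀ z, 0 < ρ z) (k : ℕ) (z : PhaseSpace d) : 0 ≤ Sig Φ ρ k z := by
  unfold Sig
  split_ifs with hk
  · exact le_min zero_le_one
      (le_sup'_of_le _ (left_mem_Icc.mpr hk) (div_nonneg (hρpos _).le (hρpos z).le))
  · exact le_rfl

lemma sig_le_one (k : ℕ) (z : PhaseSpace d) : Sig Φ ρ k z ≤ 1 := by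
  unfold Sig
  split_ifs
  exacts [min_le_left _ _, zero_le_one]

lemma sig_mono (hρpos : ∀ z, 0 < ρ z) (z : PhaseSpace d) : Monotone fun k => Sig Φ ρ k z := by
  refine monotone_nat_of_le_succ fun k => ?_
  cases k with
  | zero => simpa [Sig] using sig_nonneg hρpos 1 z
  | succ k =>
    rw [Sig, Sig, dif_pos (by omega), dif_pos (by omega)]
    exact min_le_min le_rfl (sup'_mono _ (Icc_subset_Icc_right (Nat.le_succ _)) _)

lemma pAcc_nonneg (hρpos : ∀ z, 0 < ρ z) (k : ℕ) (z : PhaseSpace d) : 0 ≤ pAcc Φ ρ k z :=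
  sub_nonneg.mpr (sig_mono hρpos z (Nat.sub_le k 1))

lemma sum_pAcc_Icc (z : PhaseSpace d) (n : ℕ) :
    ∑ k ∈ Icc 1 n, pAcc Φ ρ k z = Sig Φ ρ n z := by
  induction n with
  | zero => simp [Sig]
  | succ n ih => rw [sum_Icc_succ_top (by omega), ih, pAcc, Nat.add_sub_cancel, add_sub_cancel]

lemma measurable_sig (hΦm : Measurable Φ) (hρm : Measurable ρ) (k : ℕ) :
    Measurable (Sig Φ ρ k) := by
  unfold Sig
  split_ifs with hk
  · refine measurable_const.min ?_
    convert Finset.measurable_sup' (nonempty_Icc.mpr hk)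
      fun j _ => (hρm.comp (hΦm.iterate j)).div hρm with z
    simp [Finset.sup'_apply]
  · exact measurable_const

end Acceptance

section Kernel

variable {d K : ℕ} {Φ : PhaseSpace d → PhaseSpace d} {ρ : PhaseSpace d → ℝ}

lemma measurable_pAcc (hΦm : Measurable Φ) (hρm : Measurable ρ) (k : ℕ) :
    Measurable (pAcc Φ ρ k) :=
  (measurable_sig hΦm hρm k).sub (measurable_sig hΦm hρm (k - 1))

lemma lintegral_dker (z : PhaseSpace d) (g : PhaseSpace d → ℝ≥0∞) :
    ∫⁻ w, g w ∂Dker K Φ ρ z =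
      ∑ k ∈ Icc 1 (K + 1), ENNReal.ofReal (pAcc Φ ρ k z) * g (Φ^[k] z) +
        ENNReal.ofReal (1 - Sig Φ ρ (K + 1) z) * g (flipMap d z) := by
  simp only [Dker, lintegral_add_measure, lintegral_finsetSum_measure, lintegral_smul_measure,
    lintegral_dirac, smul_eq_mul]

lemma measurable_dker (hΦm : Measurable Φ) (hρm : Measurable ρ) :
    Measurable (Dker K Φ ρ) := by
  refine Measure.measurable_of_measurable_coe _ fun s hs => ?_
  have hind : Measurable (s.indicator (1 : PhaseSpace d → ℝ≥0∞)) :=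
    measurable_one.indicator hs
  simp_rw [← lintegral_indicator_one hs, lintegral_dker]
  exact (Finset.measurable_sum _ fun k _ => (measurable_pAcc hΦm hρm k).ennreal_ofReal.mul
      (hind.comp (hΦm.iterate k))).add
    ((measurable_const.sub (measurable_sig hΦm hρm _)).ennreal_ofReal.mul
      (hind.comp measurable_flipMap))

lemma isProbabilityMeasure_dker (hρpos : ∀ z, 0 < ρ z) (z : PhaseSpace d) :
    IsProbabilityMeasure (Dker K Φ ρ z) := by
  constructor
  rw [← lintegral_one, lintegral_dker]
  simp only [mul_one]
  rw [← ENNReal.ofReal_sum_of_nonneg fun k _ => pAcc_nonneg hρpos k z, sum_pAcc_Icc,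
    ← ENNReal.ofReal_add (sig_nonneg hρpos _ z) (sub_nonneg.mpr (sig_le_one _ z)),
    add_sub_cancel, ENNReal.ofReal_one]

lemma lintegral_mul_lintegral_dker (hΦm : Measurable Φ) (hρm : Measurable ρ)
    {g : PhaseSpace d → PhaseSpace d → ℝ≥0∞} (hg : Measurable (uncurry g)) :
    ∫⁻ z, ENNReal.ofReal (ρ z) * ∫⁻ w, g z w ∂Dker K Φ ρ z =
      (∑ k ∈ Icc 1 (K + 1),
          ∫⁻ z, ENNReal.ofReal (ρ z) * ENNReal.ofReal (pAcc Φ ρ k z) * g z (Φ^[k] z)) +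
        ∫⁻ z, ENNReal.ofReal (ρ z) * ENNReal.ofReal (1 - Sig Φ ρ (K + 1) z) *
          g z (flipMap d z) := by
  have hacc : ∀ k ∈ Icc 1 (K + 1), Measurable fun z =>
      ENNReal.ofReal (ρ z) * ENNReal.ofReal (pAcc Φ ρ k z) * g z (Φ^[k] z) := fun k _ =>
    (hρm.ennreal_ofReal.mul (measurable_pAcc hΦm hρm k).ennreal_ofReal).mul
      (hg.comp (measurable_id.prodMk (hΦm.iterate k)))
  calc _ = ∫⁻ z, (∑ k ∈ Icc 1 (K + 1),
          ENNReal.ofReal (ρ z) * ENNReal.ofReal (pAcc Φ ρ k z) * g z (Φ^[k] z)) +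
        ENNReal.ofReal (ρ z) * ENNReal.ofReal (1 - Sig Φ ρ (K + 1) z) * g z (flipMap d z) :=
        lintegral_congr fun z => by simp only [lintegral_dker, mul_add, mul_sum, mul_assoc]
    _ = _ := by rw [lintegral_add_left (Finset.measurable_sum _ hacc), lintegral_finsetSum _ hacc]

theorem modifiedDetailedBalance_dker (hΦ : ∀ z, Φ (flipMap d (Φ z)) = flipMap d z)
    (hΦpres : MeasurePreserving Φ volume volume) (hρm : Measurable ρ)
    (hρpos : ∀ z, 0 < ρ z) (hρF : ∀ z, ρ (flipMap d z) = ρ z)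
    (f : PhaseSpace d → PhaseSpace d → ℝ≥0∞) (hf : Measurable (uncurry f)) :
    ∫⁻ z, ENNReal.ofReal (ρ z) * ∫⁻ w, f z w ∂Dker K Φ ρ z =
      ∫⁻ z', ENNReal.ofReal (ρ (flipMap d z')) *
        ∫⁻ w, f (flipMap d w) z' ∂Dker K Φ ρ (flipMap d z') := by
  have hΦm := hΦpres.measurable
  have hf' : Measurable (uncurry fun z w => f (flipMap d w) (flipMap d z)) :=
    hf.comp ((measurable_flipMap.comp measurable_snd).prodMk
      (measurable_flipMap.comp measurable_fst))
  conv_rhs => rw [← lintegral_comp_flipMap]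
  simp only [flipMap_involutive _]
  rw [lintegral_mul_lintegral_dker hΦm hρm hf, lintegral_mul_lintegral_dker hΦm hρm hf']
  congr 1
  · refine sum_congr rfl fun k hk => (lintegral_mul_comp_eq_of_reversible flipMap_involutive
      (measurePreserving_flipMap.comp (hΦpres.iterate k)) (fun z => ?_) (fun z => ?_) f).symm
    · simp only [comp_apply, iterate_apply_apply_iterate_eq hΦ, flipMap_involutive _]
    · rw [← ENNReal.ofReal_mul (hρpos _).le, ← ENNReal.ofReal_mul (hρpos _).le,
        mul_pAcc_flipMap_iterate hΦ hρpos hρF (mem_Icc.mp hk).1]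
  · simp only [flipMap_involutive _]

end Kernel

theorem xcghmc_modified_detailed_balance_and_invariance_general
    (d K : ℕ)
    (Φ : PhaseSpace d → PhaseSpace d)
    (hΦrev : ∀ z, Φ (flipMap d (Φ (flipMap d z))) = z)
    (hΦpres : MeasurePreserving Φ
      (volume : Measure (PhaseSpace d)) volume)
    (ρ : PhaseSpace d → ℝ) (hρm : Measurable ρ)
    (hρpos : ∀ z, 0 < ρ z) (hρF : ∀ z, ρ (flipMap d z) = ρ z) :
    (∀ f : PhaseSpace d → PhaseSpace d → ENNReal,
      Measurable (Function.uncurry f) →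
      ∫⁻ z, ENNReal.ofReal (ρ z) * ∫⁻ w, f z w ∂(Dker K Φ ρ z) =
        ∫⁻ z', ENNReal.ofReal (ρ (flipMap d z')) *
          ∫⁻ w, f (flipMap d w) z' ∂(Dker K Φ ρ (flipMap d z'))) ∧
    ((volume : Measure (PhaseSpace d)).withDensity
        (fun z => ENNReal.ofReal (ρ z))).bind (Dker K Φ ρ) =
      (volume : Measure (PhaseSpace d)).withDensity
        (fun z => ENNReal.ofReal (ρ z)) := by
  have hΦF : ∀ z, Φ (flipMap d (Φ z)) = flipMap d z := fun z => by
    simpa only [flipMap_involutive z] using hΦrev (flipMap d z)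
  have hbalance := modifiedDetailedBalance_dker (K := K) hΦF hΦpres hρm hρpos hρF
  exact ⟨hbalance, bind_withDensity_eq_of_modifiedDetailedBalance
    (measurable_dker hΦpres.measurable hρm) (isProbabilityMeasure_dker hρpos)
    hρm.ennreal_ofReal (fun z => by simp only [hρF]) hbalance⟩

/-- The extra-chance kernel `D` satisfies modified detailed balance with
respect to `ρ`, and consequently `ρ` is an invariant density of `D`. -/
theorem xcghmc_modified_detailed_balance_and_invariance
    (d K : ℕ) (hd : 1 ≤ d)
    (Φ : PhaseSpace d → PhaseSpace d) (hΦbij : Function.Bijective Φ)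
    (hΦrev : ∀ z, Φ (flipMap d (Φ (flipMap d z))) = z)
    (hΦpres : MeasurePreserving Φ
      (volume : Measure (PhaseSpace d)) volume)
    (ρ : PhaseSpace d → ℝ) (hρm : Measurable ρ)
    (hρpos : ∀ z, 0 < ρ z) (hρF : ∀ z, ρ (flipMap d z) = ρ z) :
    (∀ f : PhaseSpace d → PhaseSpace d → ENNReal,
      Measurable (Function.uncurry f) →
      ∫⁻ z, ENNReal.ofReal (ρ z) * ∫⁻ w, f z w ∂(Dker K Φ ρ z) =
        ∫⁻ z', ENNReal.ofReal (ρ (flipMap d z')) *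
          ∫⁻ w, f (flipMap d w) z' ∂(Dker K Φ ρ (flipMap d z'))) ∧
    ((volume : Measure (PhaseSpace d)).withDensity
        (fun z => ENNReal.ofReal (ρ z))).bind (Dker K Φ ρ) =
      (volume : Measure (PhaseSpace d)).withDensity
        (fun z => ENNReal.ofReal (ρ z)) :=
  xcghmc_modified_detailed_balance_and_invariance_general d K Φ hΦrev hΦpres ρ hρm hρpos hρF
end
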